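/- Let α, β ∈ ℂ and let c : ℝ² → ℝ be the real cubic form given in the complex coordinate z = x + iy by c(z) = (1/6)·Re(αz³ + 3βz²z̄). Then the three functions ℝ² → ℝ given by (x,y) ↦ x² + y², (x,y) ↦ (∂c/∂x)(x,y), and (x,y) ↦ (∂c/∂y)(x,y) are linearly independent over ℝ if and only if |β| ≠ |α|. (This is the condition that the umbilic is a star, monster, or lemon.) -/

import Mathlib

/-- Partial derivative in the `x`-direction. -/
noncomputable def pdx (f : ℝ × ℝ → ℝ) : ℝ × ℝ → ℝ :=
  fun p => fderiv ℝ f p (1, 0)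

/-- Partial derivative in the `y`-direction. -/
noncomputable def pdy (f : ℝ × ℝ → ℝ) : ℝ × ℝ → ℝ :=
  fun p => fderiv ℝ f p (0, 1)

/-- The real cubic form `c(z) = (1/6)·Re(αz³ + 3βz²z̄)` in real coordinates `z = x + iy`. -/
noncomputable def cubicFormR (α β : ℂ) (p : ℝ × ℝ) : ℝ :=
  (1 / 6 : ℝ) * (α * ((p.1 : ℂ) + (p.2 : ℂ) * Complex.I) ^ 3 +
    3 * β * ((p.1 : ℂ) + (p.2 : ℂ) * Complex.I) ^ 2 *
      (starRingEnd ℂ ((p.1 : ℂ) + (p.2 : ℂ) * Complex.I))).re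

section aux

lemma pdx_cubicPoly (A B C D : ℝ) :
    pdx (fun q : ℝ × ℝ =>
        A * (q.1 * (q.1 * q.1)) + B * (q.1 * (q.1 * q.2)) +
        C * (q.1 * (q.2 * q.2)) + D * (q.2 * (q.2 * q.2)))
      = fun p => 3 * A * p.1 ^ 2 + 2 * B * (p.1 * p.2) + C * p.2 ^ 2 := by
  funext p
  have h1 : HasFDerivAt (fun q : ℝ × ℝ => q.1) (ContinuousLinearMap.fst ℝ ℝ ℝ) p :=
    hasFDerivAt_fst
  have h2 : HasFDerivAt (fun q : ℝ × ℝ => q.2) (ContinuousLinearMap.snd ℝ ℝ ℝ) p :=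
    hasFDerivAt_snd
  have H := ((((h1.mul (h1.mul h1)).const_mul A).add
      ((h1.mul (h1.mul h2)).const_mul B)).add
      ((h1.mul (h2.mul h2)).const_mul C)).add
      ((h2.mul (h2.mul h2)).const_mul D)
  show fderiv ℝ _ p (1, 0) = _
  rw [HasFDerivAt.fderiv (f := (fun q : ℝ × ℝ => A * (q.1 * (q.1 * q.1)) + B * (q.1 * (q.1 * q.2)) + C * (q.1 * (q.2 * q.2)) + D * (q.2 * (q.2 * q.2)))) H]
  simp
  ring

lemma pdy_cubicPoly (A B C D : ℝ) :
    pdy (fun q : ℝ × ℝ =>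
        A * (q.1 * (q.1 * q.1)) + B * (q.1 * (q.1 * q.2)) +
        C * (q.1 * (q.2 * q.2)) + D * (q.2 * (q.2 * q.2)))
      = fun p => B * p.1 ^ 2 + 2 * C * (p.1 * p.2) + 3 * D * p.2 ^ 2 := by
  funext p
  have h1 : HasFDerivAt (fun q : ℝ × ℝ => q.1) (ContinuousLinearMap.fst ℝ ℝ ℝ) p :=
    hasFDerivAt_fst
  have h2 : HasFDerivAt (fun q : ℝ × ℝ => q.2) (ContinuousLinearMap.snd ℝ ℝ ℝ) p :=
    hasFDerivAt_snd
  have H := ((((h1.mul (h1.mul h1)).const_mul A).add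
      ((h1.mul (h1.mul h2)).const_mul B)).add
      ((h1.mul (h2.mul h2)).const_mul C)).add
      ((h2.mul (h2.mul h2)).const_mul D)
  show fderiv ℝ _ p (0, 1) = _
  rw [HasFDerivAt.fderiv (f := (fun q : ℝ × ℝ => A * (q.1 * (q.1 * q.1)) + B * (q.1 * (q.1 * q.2)) + C * (q.1 * (q.2 * q.2)) + D * (q.2 * (q.2 * q.2)))) H]
  simp
  ring

lemma cubicFormR_eq (α β : ℂ) :
    cubicFormR α β = fun q : ℝ × ℝ =>
      ((α.re + 3 * β.re) / 6) * (q.1 * (q.1 * q.1)) +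
      ((-3 * α.im - 3 * β.im) / 6) * (q.1 * (q.1 * q.2)) +
      ((3 * β.re - 3 * α.re) / 6) * (q.1 * (q.2 * q.2)) +
      ((α.im - 3 * β.im) / 6) * (q.2 * (q.2 * q.2)) := by
  funext q
  simp only [cubicFormR, pow_succ, pow_zero, one_mul, Complex.add_re, Complex.mul_re,
    Complex.mul_im, Complex.add_im, Complex.I_re, Complex.I_im, Complex.ofReal_re,
    Complex.ofReal_im, Complex.conj_re, Complex.conj_im, Complex.re_ofNat, Complex.im_ofNat]
  ring

/-- The linear map sending coefficients to the associated quadratic form as a function. -/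
noncomputable def quadMap : (Fin 3 → ℝ) →ₗ[ℝ] ((ℝ × ℝ) → ℝ) where
  toFun w := fun p => w 0 * p.1 ^ 2 + w 1 * (p.1 * p.2) + w 2 * p.2 ^ 2
  map_add' u v := by funext p; simp; ring
  map_smul' c u := by funext p; simp; ring

lemma quadMap_ker : LinearMap.ker quadMap = ⊥ := by
  rw [LinearMap.ker_eq_bot']
  intro w hw
  have h0 := congrFun hw (1, 0)
  have h1 := congrFun hw (0, 1)
  have h2 := congrFun hw (1, 1)
  simp [quadMap] at h0 h1 h2
  funext i
  fin_cases i <;> simp <;> linarith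

end aux

/-- The three functions `x² + y²`, `∂c/∂x`, `∂c/∂y` are linearly independent over `ℝ`
if and only if `|β| ≠ |α|`. -/
theorem stmt3 (α β : ℂ) :
    LinearIndependent ℝ
      ![(fun p : ℝ × ℝ => p.1 ^ 2 + p.2 ^ 2),
        pdx (cubicFormR α β), pdy (cubicFormR α β)] ↔
      ‖β‖ ≠ ‖α‖ := by
  set a1 := α.re; set a2 := α.im; set b1 := β.re; set b2 := β.im
  have hx : pdx (cubicFormR α β)
      = fun p : ℝ × ℝ => ((a1 + 3 * b1) / 2) * p.1 ^ 2 + (-(a2 + b2)) * (p.1 * p.2) +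
          ((b1 - a1) / 2) * p.2 ^ 2 := by
    rw [cubicFormR_eq, pdx_cubicPoly]
    funext p; ring
  have hy : pdy (cubicFormR α β)
      = fun p : ℝ × ℝ => (-(a2 + b2) / 2) * p.1 ^ 2 + (b1 - a1) * (p.1 * p.2) +
          ((a2 - 3 * b2) / 2) * p.2 ^ 2 := by
    rw [cubicFormR_eq, pdy_cubicPoly]
    funext p; ring
  set v : Fin 3 → Fin 3 → ℝ :=
    ![![1, 0, 1],
      ![(a1 + 3 * b1) / 2, -(a2 + b2), (b1 - a1) / 2],
      ![-(a2 + b2) / 2, b1 - a1, (a2 - 3 * b2) / 2]] with hv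
  have hfam : ![(fun p : ℝ × ℝ => p.1 ^ 2 + p.2 ^ 2),
        pdx (cubicFormR α β), pdy (cubicFormR α β)] = quadMap ∘ v := by
    funext i
    fin_cases i
    · funext p; simp [quadMap, hv]
    · rw [Function.comp]; simp only [hv]; rw [hx]
      funext p; simp [quadMap]
    · rw [Function.comp]; simp only [hv]; rw [hy]
      funext p; simp [quadMap]
  rw [hfam, LinearMap.linearIndependent_iff quadMap quadMap_ker]
  rw [show v = (Matrix.of v).row from rfl,
    Matrix.linearIndependent_rows_iff_isUnit,
    Matrix.isUnit_iff_isUnit_det, isUnit_iff_ne_zero]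
  have hdet : (Matrix.of v).det = Complex.normSq β - Complex.normSq α := by
    rw [Matrix.det_fin_three]
    simp [hv, Matrix.of_apply, Complex.normSq_apply]
    ring
  rw [hdet]
  rw [sub_ne_zero]
  constructor
  · intro h hab
    exact h (by rw [← Complex.sq_norm, ← Complex.sq_norm, hab])
  · intro h hn
    exact h (by rw [Complex.norm_def, Complex.norm_def, hn])
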